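/- arXiv:2111.00213 — 3 statements merged into one kernel-verified Lean document; each statement's English description precedes it below -/
import Mathlib

section
/- In a deterministic MDP, for any state s, goal g, and positive integer k with k ≤ d_st(s, φ⁻¹(g)), there exists a surrogate goal g̃ in the k-step adjacent region G_A(s,k) such that the optimal goal-conditioned policy produces the same actions toward g̃ as toward g along the first k steps of the shortest trajectory from s to φ⁻¹(g): π*(s_i, g̃) = π*(s_i, g) for i = 0, ..., k-1. -/
/-- **Surrogate goal lemma (deterministic MDPs).**
Setting: deterministic communicating MDP with states `S`, actions `A`, goals `G`,
bijection `φ : S ≃ G`, edge relation `step` of the induced graph, shortest transition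
distance `d` (satisfying the triangle inequality, with `d u v ≤ 1` across edges),
inverse dynamics `α` and an optimal goal-conditioned policy `π'` that follows shortest
trajectories: along any shortest trajectory `ρ` of length `m` to the goal state
`φ.symm g`, we have `π' (ρ i) g = α (ρ i) (ρ (i+1))` for `i < m`.
Then for any `s`, `g`, and `0 < k ≤ d s (φ.symm g)`, there exists a surrogate goal
`g'` in the `k`-step adjacent region `G_A(s,k) = {g' | d s (φ.symm g') ≤ k}` such that
`π' (s_i, g') = π' (s_i, g)` for `i = 0, …, k-1` along the shortest trajectory `τ`
from `s` to `φ.symm g`. -/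
theorem surrogate_goal_exists
    {S A G : Type*} (φ : S ≃ G) (step : S → S → Prop) (d : S → S → ℕ)
    (π' : S → G → A) (α : S → S → A)
    (htri : ∀ a b c : S, d a c ≤ d a b + d b c)
    (hedge : ∀ u v : S, step u v → d u v ≤ 1)
    (hpi : ∀ (g : G) (m : ℕ) (ρ : ℕ → S),
      (∀ i < m, step (ρ i) (ρ (i + 1))) → ρ m = φ.symm g →
      d (ρ 0) (φ.symm g) = m → ∀ i < m, π' (ρ i) g = α (ρ i) (ρ (i + 1)))
    (s : S) (g : G) (n k : ℕ) (τ : ℕ → S)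
    (hτ0 : τ 0 = s) (hτn : τ n = φ.symm g)
    (hpath : ∀ i < n, step (τ i) (τ (i + 1)))
    (hshort : d s (φ.symm g) = n)
    (hk : 0 < k) (hkn : k ≤ n) :
    ∃ g' : G, d s (φ.symm g') ≤ k ∧ ∀ i < k, π' (τ i) g' = π' (τ i) g := by
  rcases eq_or_lt_of_le hkn with hkeq | hklt
  · exact ⟨g, by rw [hshort, hkeq], fun i _ => rfl⟩
  -- segment bound: d (τ a) (τ b) ≤ b - a for a < b ≤ n
  have hseg : ∀ b, b ≤ n → ∀ a, a < b → d (τ a) (τ b) ≤ b - a := by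
    intro b hb
    induction b with
    | zero => intro a ha; omega
    | succ b ih =>
      intro a ha
      rcases Nat.lt_or_ge a b with h | h
      · calc d (τ a) (τ (b+1)) ≤ d (τ a) (τ b) + d (τ b) (τ (b+1)) := htri _ _ _
          _ ≤ (b - a) + 1 := by
              gcongr
              · exact ih (le_trans (Nat.le_succ _) hb) a h
              · exact hedge _ _ (hpath b (Nat.lt_of_succ_le hb))
          _ ≤ b + 1 - a := by omega
      · have hab : a = b := by omega
        subst hab
        have := hedge _ _ (hpath a (Nat.lt_of_succ_le hb))
        omega
  have h1 : d s (τ k) ≤ k := by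
    rw [← hτ0]
    simpa using hseg k hkn 0 hk
  have h2 : d (τ k) (φ.symm g) ≤ n - k := by
    rw [← hτn]; exact hseg n le_rfl k hklt
  have heq : d s (τ k) = k := by
    have := htri s (τ k) (φ.symm g)
    omega
  refine ⟨φ (τ k), ?_, ?_⟩
  · simpa using h1
  · intro i hi
    have hA : π' (τ i) (φ (τ k)) = α (τ i) (τ (i+1)) :=
      hpi (φ (τ k)) k τ (fun j hj => hpath j (lt_of_lt_of_le hj hkn))
        (by simp) (by rw [hτ0]; simpa using heq) i hi
    have hB : π' (τ i) g = α (τ i) (τ (i+1)) :=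
      hpi g n τ hpath hτn (by rw [hτ0]; exact hshort) i (lt_of_lt_of_le hi hkn)
    rw [hA, hB]
end

section
/- Fixed-point suboptimality bound: Let S be a finite set, γ ∈ [0,1), and let T₁, T₂ be two affine operators on functions V : S → ℝ of the form (T_i V)(s) = ⟨p_i(s), r(s)⟩ + γ ⟨p_i(s), V⟩, where p_1(s), p_2(s) are probability vectors on S and r(s) ∈ [0, kR_max]^S. Let V₁, V₂ be the unique fixed points of T₁, T₂ respectively, and suppose both V₁ and V₂ take values in [0, kR_max/(1−γ)]. If ‖p_1(s) − p_2(s)‖₁ ≤ ε for all s, then ‖V₁ − V₂‖_∞ ≤ ε k R_max / (2(1−γ)) + γ ε k R_max / (2(1−γ)²). -/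
open Finset

/-- **Fixed-point suboptimality bound.**
`S` finite, `γ ∈ [0,1)`. Two affine Bellman-type operators with effective successor
distributions `p₁ s`, `p₂ s` (probability vectors on `S`) and rewards
`r s s' ∈ [0, k R_max]` have unique fixed points `V₁, V₂`, both taking values in
`[0, k R_max / (1−γ)]`. If `‖p₁ s − p₂ s‖₁ ≤ ε` for all `s`, then
`‖V₁ − V₂‖_∞ ≤ ε k R_max / (2(1−γ)) + γ ε k R_max / (2(1−γ)²)`. -/
theorem fixed_point_suboptimality_bound
    {S : Type*} [Fintype S]
    (γ k Rmax ε : ℝ) (hγ0 : 0 ≤ γ) (hγ1 : γ < 1) (hε : 0 ≤ ε)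
    (p₁ p₂ : S → S → ℝ) (r : S → S → ℝ) (V₁ V₂ : S → ℝ)
    (hp₁0 : ∀ s s', 0 ≤ p₁ s s') (hp₁1 : ∀ s, ∑ s', p₁ s s' = 1)
    (hp₂0 : ∀ s s', 0 ≤ p₂ s s') (hp₂1 : ∀ s, ∑ s', p₂ s s' = 1)
    (hr : ∀ s s', 0 ≤ r s s' ∧ r s s' ≤ k * Rmax)
    (hV₁ : ∀ s, V₁ s = (∑ s', p₁ s s' * r s s') + γ * ∑ s', p₁ s s' * V₁ s')
    (hV₂ : ∀ s, V₂ s = (∑ s', p₂ s s' * r s s') + γ * ∑ s', p₂ s s' * V₂ s')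
    (hV₁b : ∀ s, 0 ≤ V₁ s ∧ V₁ s ≤ k * Rmax / (1 - γ))
    (hV₂b : ∀ s, 0 ≤ V₂ s ∧ V₂ s ≤ k * Rmax / (1 - γ))
    (hℓ1 : ∀ s, ∑ s', |p₁ s s' - p₂ s s'| ≤ ε) :
    ∀ s, |V₁ s - V₂ s| ≤
      ε * k * Rmax / (2 * (1 - γ)) + γ * ε * k * Rmax / (2 * (1 - γ) ^ 2) := by
  intro s
  have h1γ : (0:ℝ) < 1 - γ := by linarith
  have hkR : (0:ℝ) ≤ k * Rmax := le_trans (hr s s).1 (hr s s).2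
  have hne : (Finset.univ : Finset S).Nonempty := ⟨s, mem_univ s⟩
  set M : ℝ := Finset.univ.sup' hne (fun t => |V₁ t - V₂ t|) with hM
  obtain ⟨s₀, -, hs₀⟩ := Finset.exists_mem_eq_sup' hne (fun t => |V₁ t - V₂ t|)
  have hMle : ∀ t : S, |V₁ t - V₂ t| ≤ M := fun t =>
    Finset.le_sup' (fun t => |V₁ t - V₂ t|) (mem_univ t)
  -- key decomposition at s₀
  have hdecomp : V₁ s₀ - V₂ s₀ =
      (∑ s', (p₁ s₀ s' - p₂ s₀ s') * (r s₀ s' - k * Rmax / 2))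
      + γ * (∑ s', (p₁ s₀ s' - p₂ s₀ s') * (V₂ s' - k * Rmax / (2 * (1 - γ))))
      + γ * (∑ s', p₁ s₀ s' * (V₁ s' - V₂ s')) := by
    have e1 := hV₁ s₀
    have e2 := hV₂ s₀
    have h11 := hp₁1 s₀
    have h21 := hp₂1 s₀
    rw [e1, e2]
    simp only [sub_mul, mul_sub, Finset.sum_sub_distrib, Finset.sum_mul,
      ← Finset.sum_mul, h11, h21]
    ring
  have habs : M ≤ ε * (k * Rmax / 2) + γ * (ε * (k * Rmax / (2 * (1 - γ)))) + γ * M := by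
    calc M = |V₁ s₀ - V₂ s₀| := hM.trans hs₀
      _ ≤ |∑ s', (p₁ s₀ s' - p₂ s₀ s') * (r s₀ s' - k * Rmax / 2)|
          + γ * |∑ s', (p₁ s₀ s' - p₂ s₀ s') * (V₂ s' - k * Rmax / (2 * (1 - γ)))|
          + γ * |∑ s', p₁ s₀ s' * (V₁ s' - V₂ s')| := by
          rw [hdecomp]
          have := abs_add_three
            (∑ s', (p₁ s₀ s' - p₂ s₀ s') * (r s₀ s' - k * Rmax / 2))
            (γ * ∑ s', (p₁ s₀ s' - p₂ s₀ s') * (V₂ s' - k * Rmax / (2 * (1 - γ))))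
            (γ * ∑ s', p₁ s₀ s' * (V₁ s' - V₂ s'))
          rw [abs_mul, abs_mul, abs_of_nonneg hγ0] at this
          exact this
      _ ≤ ε * (k * Rmax / 2) + γ * (ε * (k * Rmax / (2 * (1 - γ)))) + γ * M := by
          gcongr
          · calc |∑ s', (p₁ s₀ s' - p₂ s₀ s') * (r s₀ s' - k * Rmax / 2)|
                ≤ ∑ s', |(p₁ s₀ s' - p₂ s₀ s') * (r s₀ s' - k * Rmax / 2)| :=
                  Finset.abs_sum_le_sum_abs _ _
              _ ≤ ∑ s', |p₁ s₀ s' - p₂ s₀ s'| * (k * Rmax / 2) := by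
                  apply Finset.sum_le_sum
                  intro i _
                  rw [abs_mul]
                  apply mul_le_mul_of_nonneg_left _ (abs_nonneg _)
                  rw [abs_le]
                  constructor
                  · have := (hr s₀ i).1; linarith
                  · have := (hr s₀ i).2; linarith
              _ = (∑ s', |p₁ s₀ s' - p₂ s₀ s'|) * (k * Rmax / 2) := by
                  rw [Finset.sum_mul]
              _ ≤ ε * (k * Rmax / 2) := by
                  apply mul_le_mul_of_nonneg_right (hℓ1 s₀) (by positivity)
          · calc |∑ s', (p₁ s₀ s' - p₂ s₀ s') * (V₂ s' - k * Rmax / (2 * (1 - γ)))|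
                ≤ ∑ s', |(p₁ s₀ s' - p₂ s₀ s') * (V₂ s' - k * Rmax / (2 * (1 - γ)))| :=
                  Finset.abs_sum_le_sum_abs _ _
              _ ≤ ∑ s', |p₁ s₀ s' - p₂ s₀ s'| * (k * Rmax / (2 * (1 - γ))) := by
                  apply Finset.sum_le_sum
                  intro i _
                  rw [abs_mul]
                  apply mul_le_mul_of_nonneg_left _ (abs_nonneg _)
                  rw [abs_le]
                  have h0 := (hV₂b i).1
                  have h2 := (hV₂b i).2
                  have : k * Rmax / (1 - γ) = 2 * (k * Rmax / (2 * (1 - γ))) := by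
                    field_simp
                  constructor <;> nlinarith
              _ = (∑ s', |p₁ s₀ s' - p₂ s₀ s'|) * (k * Rmax / (2 * (1 - γ))) := by
                  rw [Finset.sum_mul]
              _ ≤ ε * (k * Rmax / (2 * (1 - γ))) := by
                  apply mul_le_mul_of_nonneg_right (hℓ1 s₀) (by positivity)
          · calc |∑ s', p₁ s₀ s' * (V₁ s' - V₂ s')|
                ≤ ∑ s', |p₁ s₀ s' * (V₁ s' - V₂ s')| :=
                  Finset.abs_sum_le_sum_abs _ _
              _ ≤ ∑ s', p₁ s₀ s' * M := by
                  apply Finset.sum_le_sum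
                  intro i _
                  rw [abs_mul, abs_of_nonneg (hp₁0 s₀ i)]
                  exact mul_le_mul_of_nonneg_left (hMle i) (hp₁0 s₀ i)
              _ = M := by rw [← Finset.sum_mul, hp₁1 s₀, one_mul]
  have hMbound : M ≤ ε * k * Rmax / (2 * (1 - γ)) + γ * ε * k * Rmax / (2 * (1 - γ) ^ 2) := by
    have h : (1 - γ) * M ≤ ε * (k * Rmax / 2) + γ * (ε * (k * Rmax / (2 * (1 - γ)))) := by
      nlinarith [habs]
    have hM' : M ≤ (ε * (k * Rmax / 2) + γ * (ε * (k * Rmax / (2 * (1 - γ))))) / (1 - γ) :=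
      (le_div_iff₀ h1γ).2 (by linarith [h])
    refine le_trans hM' (le_of_eq ?_)
    field_simp
  exact le_trans (hMle s) hMbound
end

section
/- Main suboptimality theorem (finite stochastic MDP form): Let S be a finite state space, G = S a goal space, P^k : S × G → Δ(S) a k-step transition kernel, r̃ : S × S → [0, kR_max] a reward function, and γ ∈ [0,1). For a high-level policy π : S → Δ(G), define V^π as the unique fixed point of (T_π V)(s) = ∑_g π(g|s) ∑_{s'} P^k(s'|s,g)(r̃(s,s') + γV(s')). Let π* be any policy and define the adjacency-constrained policy π_adj by π_adj(g|s) = ∑_{g'} P^k(g|s,g') π*(g'|s). Let μ_k = max_{s,g,s'} |P^k(s'|s,g) − ∑_{s̃} P^k(s'|s,s̃) P^k(s̃|s,g)|. Then ‖V^{π*} − V^{π_adj}‖_∞ ≤ |S| · ( μ_k k R_max / (2(1−γ)) + γ μ_k k R_max / (2(1−γ)²) ). -/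
open Finset

/-- **Main suboptimality theorem (finite stochastic MDP form).**
`S` is a finite state space, goals are identified with states (`G = S`),
`Pk s g` is the `k`-step transition PMF on `S` under the optimal goal-conditioned
low-level policy targeting goal `g` from state `s`, `rt s s' ∈ [0, k R_max]` is the
expected `k`-step high-level reward, and `γ ∈ [0,1)`. `V^π` is the unique fixed point
of the high-level Bellman operator. `πadj g|s := ∑_{g'} Pk(g|s,g') π*(g'|s)` is the
adjacency-constrained policy constructed from an arbitrary policy `π*`, and
`μ` bounds the `k`-step transition mismatch rate
`|P^k(s'|s,g) − ∑_{s̃} P^k(s'|s,s̃) P^k(s̃|s,g)| ≤ μ`.  Then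
`‖V^{π*} − V^{πadj}‖_∞ ≤ |S| (μ k R_max/(2(1−γ)) + γ μ k R_max/(2(1−γ)²))`. -/
theorem adjacency_constraint_suboptimality
    {S : Type*} [Fintype S]
    (γ k Rmax μ : ℝ) (hγ0 : 0 ≤ γ) (hγ1 : γ < 1) (hμ0 : 0 ≤ μ)
    (Pk : S → S → S → ℝ) (rt : S → S → ℝ) (πstar : S → S → ℝ)
    (hP0 : ∀ s g s', 0 ≤ Pk s g s') (hP1 : ∀ s g, ∑ s', Pk s g s' = 1)
    (hπ0 : ∀ s g, 0 ≤ πstar s g) (hπ1 : ∀ s, ∑ g, πstar s g = 1)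
    (hr : ∀ s s', 0 ≤ rt s s' ∧ rt s s' ≤ k * Rmax)
    (hμ : ∀ s g s',
      |Pk s g s' - ∑ st, Pk s st s' * Pk s g st| ≤ μ)
    (V₁ V₂ : S → ℝ)
    (hV₁ : ∀ s, V₁ s =
      ∑ g, πstar s g * ∑ s', Pk s g s' * (rt s s' + γ * V₁ s'))
    (hV₂ : ∀ s, V₂ s =
      ∑ g, (∑ g', Pk s g' g * πstar s g') * ∑ s', Pk s g s' * (rt s s' + γ * V₂ s'))
    (hV₁b : ∀ s, 0 ≤ V₁ s ∧ V₁ s ≤ k * Rmax / (1 - γ))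
    (hV₂b : ∀ s, 0 ≤ V₂ s ∧ V₂ s ≤ k * Rmax / (1 - γ)) :
    ∀ s, |V₁ s - V₂ s| ≤ (Fintype.card S : ℝ) *
      (μ * k * Rmax / (2 * (1 - γ)) + γ * μ * k * Rmax / (2 * (1 - γ) ^ 2)) := by
  intro s
  haveI : Nonempty S := ⟨s⟩
  have h1γ : (0:ℝ) < 1 - γ := by linarith
  have hkR : 0 ≤ k * Rmax := le_trans (hr s s).1 (hr s s).2
  set M : ℝ := k * Rmax / (2 * (1 - γ)) with hM
  have hM0 : 0 ≤ M := by positivity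
  -- effective successor distributions
  set p₁ : S → S → ℝ := fun t s' => ∑ g, πstar t g * Pk t g s' with hp₁
  set p₂ : S → S → ℝ := fun t s' => ∑ g, (∑ g', Pk t g' g * πstar t g') * Pk t g s'
    with hp₂
  have hV₁' : ∀ t, V₁ t = ∑ s', p₁ t s' * (rt t s' + γ * V₁ s') := by
    intro t
    rw [hV₁ t]
    simp only [hp₁, Finset.mul_sum, Finset.sum_mul]
    rw [Finset.sum_comm]
    apply Finset.sum_congr rfl; intro s' _
    apply Finset.sum_congr rfl; intro g _; ring
  have hV₂' : ∀ t, V₂ t = ∑ s', p₂ t s' * (rt t s' + γ * V₂ s') := by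
    intro t
    rw [hV₂ t]
    simp only [hp₂, Finset.mul_sum, Finset.sum_mul]
    rw [Finset.sum_comm]
    refine Finset.sum_congr rfl fun s' _ => Finset.sum_congr rfl fun g _ =>
      Finset.sum_congr rfl fun g' _ => by ring
  have hp₁sum : ∀ t, ∑ s', p₁ t s' = 1 := by
    intro t
    simp only [hp₁]
    rw [Finset.sum_comm]
    calc ∑ g, ∑ s', πstar t g * Pk t g s'
        = ∑ g, πstar t g * ∑ s', Pk t g s' := by
          apply Finset.sum_congr rfl; intro g _; rw [Finset.mul_sum]
      _ = 1 := by simp only [hP1, mul_one]; exact hπ1 t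
  have hp₂sum : ∀ t, ∑ s', p₂ t s' = 1 := by
    intro t
    simp only [hp₂]
    rw [Finset.sum_comm]
    calc ∑ g, ∑ s', (∑ g', Pk t g' g * πstar t g') * Pk t g s'
        = ∑ g, (∑ g', Pk t g' g * πstar t g') * ∑ s', Pk t g s' := by
          apply Finset.sum_congr rfl; intro g _; rw [Finset.mul_sum]
      _ = ∑ g, ∑ g', Pk t g' g * πstar t g' := by simp only [hP1, mul_one]
      _ = ∑ g', (∑ g, Pk t g' g) * πstar t g' := by
          rw [Finset.sum_comm]
          apply Finset.sum_congr rfl; intro g' _; rw [Finset.sum_mul]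
      _ = 1 := by simp only [hP1, one_mul]; exact hπ1 t
  have hp₂0 : ∀ t s', 0 ≤ p₂ t s' := by
    intro t s'
    apply Finset.sum_nonneg; intro g _
    exact mul_nonneg (Finset.sum_nonneg fun g' _ =>
      mul_nonneg (hP0 _ _ _) (hπ0 _ _)) (hP0 _ _ _)
  -- pointwise bound on effective transition mismatch
  have hpdiff : ∀ t s', |p₁ t s' - p₂ t s'| ≤ μ := by
    intro t s'
    have h2 : p₂ t s' = ∑ g, πstar t g * ∑ st, Pk t st s' * Pk t g st := by
      simp only [hp₂]
      calc ∑ g, (∑ g', Pk t g' g * πstar t g') * Pk t g s'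
          = ∑ g, ∑ g', Pk t g' g * πstar t g' * Pk t g s' := by
            apply Finset.sum_congr rfl; intro g _; rw [Finset.sum_mul]
        _ = ∑ g', ∑ g, Pk t g' g * πstar t g' * Pk t g s' := Finset.sum_comm
        _ = ∑ g', πstar t g' * ∑ st, Pk t st s' * Pk t g' st := by
            apply Finset.sum_congr rfl; intro g' _
            rw [Finset.mul_sum]
            apply Finset.sum_congr rfl; intro st _; ring
    have hd : p₁ t s' - p₂ t s'
        = ∑ g, πstar t g * (Pk t g s' - ∑ st, Pk t st s' * Pk t g st) := by
      rw [h2, hp₁]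
      rw [← Finset.sum_sub_distrib]
      apply Finset.sum_congr rfl; intro g _; ring
    rw [hd]
    calc |∑ g, πstar t g * (Pk t g s' - ∑ st, Pk t st s' * Pk t g st)|
        ≤ ∑ g, |πstar t g * (Pk t g s' - ∑ st, Pk t st s' * Pk t g st)| :=
          Finset.abs_sum_le_sum_abs _ _
      _ ≤ ∑ g, πstar t g * μ := by
          apply Finset.sum_le_sum; intro g _
          rw [abs_mul, abs_of_nonneg (hπ0 t g)]
          exact mul_le_mul_of_nonneg_left (hμ t g s') (hπ0 t g)
      _ = μ := by rw [← Finset.sum_mul, hπ1 t, one_mul]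
  -- bound on |rt + γ V₁ - M|
  have hfb : ∀ t s', |rt t s' + γ * V₁ s' - M| ≤ M := by
    intro t s'
    have h1 := (hr t s').1
    have h2 := (hr t s').2
    have h3 := (hV₁b s').1
    have h4 := (hV₁b s').2
    have hγV : γ * V₁ s' ≤ γ * (k * Rmax / (1 - γ)) :=
      mul_le_mul_of_nonneg_left h4 hγ0
    have h2M : k * Rmax + γ * (k * Rmax / (1 - γ)) = 2 * M := by
      rw [hM]; field_simp; ring
    rw [abs_le]
    constructor
    · nlinarith [mul_nonneg hγ0 h3]
    · linarith
  -- maximizer of |V₁ - V₂|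
  obtain ⟨s₀, -, hs₀⟩ := Finset.exists_max_image Finset.univ
    (fun t => |V₁ t - V₂ t|) ⟨s, Finset.mem_univ s⟩
  set D : ℝ := |V₁ s₀ - V₂ s₀| with hD
  have hD0 : 0 ≤ D := abs_nonneg _
  -- key contraction inequality
  have key : ∀ t, |V₁ t - V₂ t| ≤ (Fintype.card S : ℝ) * (μ * M) + γ * D := by
    intro t
    have hid : V₁ t - V₂ t
        = (∑ s', (p₁ t s' - p₂ t s') * (rt t s' + γ * V₁ s' - M))
          + γ * ∑ s', p₂ t s' * (V₁ s' - V₂ s') := by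
      have e : (∑ s', (p₁ t s' - p₂ t s') * (rt t s' + γ * V₁ s' - M))
            + γ * ∑ s', p₂ t s' * (V₁ s' - V₂ s')
          = (∑ s', p₁ t s' * (rt t s' + γ * V₁ s'))
            - (∑ s', p₂ t s' * (rt t s' + γ * V₂ s'))
            - M * ((∑ s', p₁ t s') - (∑ s', p₂ t s')) := by
        rw [Finset.mul_sum, mul_sub, Finset.mul_sum, Finset.mul_sum,
          ← Finset.sum_sub_distrib, ← Finset.sum_sub_distrib,
          ← Finset.sum_sub_distrib, ← Finset.sum_add_distrib]
        apply Finset.sum_congr rfl; intro s' _; ring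
      rw [e, hp₁sum, hp₂sum, sub_self, mul_zero, sub_zero, ← hV₁' t, ← hV₂' t]
    rw [hid]
    calc |(∑ s', (p₁ t s' - p₂ t s') * (rt t s' + γ * V₁ s' - M))
          + γ * ∑ s', p₂ t s' * (V₁ s' - V₂ s')|
        ≤ |∑ s', (p₁ t s' - p₂ t s') * (rt t s' + γ * V₁ s' - M)|
          + |γ * ∑ s', p₂ t s' * (V₁ s' - V₂ s')| := abs_add_le _ _
      _ ≤ (Fintype.card S : ℝ) * (μ * M) + γ * D := by
          gcongr
          · calc |∑ s', (p₁ t s' - p₂ t s') * (rt t s' + γ * V₁ s' - M)|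
                ≤ ∑ s', |(p₁ t s' - p₂ t s') * (rt t s' + γ * V₁ s' - M)| :=
                  Finset.abs_sum_le_sum_abs _ _
              _ ≤ ∑ _s' : S, μ * M := by
                  apply Finset.sum_le_sum; intro s' _
                  rw [abs_mul]
                  exact mul_le_mul (hpdiff t s') (hfb t s') (abs_nonneg _) hμ0
              _ = (Fintype.card S : ℝ) * (μ * M) := by
                  rw [Finset.sum_const, Finset.card_univ, nsmul_eq_mul]
          · rw [abs_mul, abs_of_nonneg hγ0]
            gcongr
            calc |∑ s', p₂ t s' * (V₁ s' - V₂ s')|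
                ≤ ∑ s', |p₂ t s' * (V₁ s' - V₂ s')| := Finset.abs_sum_le_sum_abs _ _
              _ ≤ ∑ s', p₂ t s' * D := by
                  apply Finset.sum_le_sum; intro s' _
                  rw [abs_mul, abs_of_nonneg (hp₂0 t s')]
                  exact mul_le_mul_of_nonneg_left (hs₀ s' (Finset.mem_univ s'))
                    (hp₂0 t s')
              _ = D := by rw [← Finset.sum_mul, hp₂sum, one_mul]
  have hDle : D ≤ (Fintype.card S : ℝ) * (μ * M) + γ * D := key s₀
  have habs : |V₁ s - V₂ s| ≤ D := hs₀ s (Finset.mem_univ s)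
  have hRHS : (Fintype.card S : ℝ) *
      (μ * k * Rmax / (2 * (1 - γ)) + γ * μ * k * Rmax / (2 * (1 - γ) ^ 2))
      = (Fintype.card S : ℝ) * (μ * M) / (1 - γ) := by
    rw [hM]; field_simp; ring
  rw [hRHS, le_div_iff₀ h1γ]
  nlinarith [mul_le_mul_of_nonneg_right habs h1γ.le]
end
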